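/- arXiv:2211.07087 — 3 statements merged into one kernel-verified Lean document; each statement's English description precedes it below -/
import Mathlib

section
/- If a topological space X is semi-locally simply connected, connected, and locally path-connected, then X admits a universal cover whose total space is simply connected. -/
/-- A space `X` is semi-locally simply connected if every point has a neighborhood `U`
such that every loop contained in `U` is null-homotopic in `X`. -/
def SemiLocallySimplyConnected (X : Type*) [TopologicalSpace X] : Prop :=
  ∀ x : X, ∃ U ∈ nhds x, ∀ (y : X) (γ : Path y y),
    Set.range γ ⊆ U → Path.Homotopic γ (Path.refl y)

open TopologicalSpace Set

attribute [local instance] Path.Homotopic.setoid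

variable {X : Type} [TopologicalSpace X] {x₀ : X}

namespace UCover

local notation "Q" x:max y:max => Quotient (Path.Homotopic.setoid x y)

noncomputable def qtrans {x y z : X} (P : Q x y) (R : Q y z) : Q x z := Path.Homotopic.Quotient.trans P R

local infixl:70 " ⊚ " => qtrans

theorem _root_.Path.Homotopic.comp_lift {a b c : X} (P₀ : Path a b) (P₁ : Path b c) :
    (⟦P₀.trans P₁⟧ : Q a c) = qtrans ⟦P₀⟧ ⟦P₁⟧ := rfl

theorem qcomp_refl {x y : X} (P : Q x y) :
    P ⊚ (⟦Path.refl y⟧ : Q y y) = P := by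
  induction P using Quotient.inductionOn with
  | h a => rw [← Path.Homotopic.comp_lift]; exact Quotient.sound ⟨Path.Homotopy.transRefl a⟩

theorem qrefl_comp {x y : X} (P : Q x y) :
    (⟦Path.refl x⟧ : Q x x) ⊚ P = P := by
  induction P using Quotient.inductionOn with
  | h a => rw [← Path.Homotopic.comp_lift]; exact Quotient.sound ⟨Path.Homotopy.reflTrans a⟩

theorem qassoc {x y z w : X} (P : Q x y) (Q' : Q y z) (R : Q z w) :
    (P ⊚ Q') ⊚ R = P ⊚ (Q' ⊚ R) := by
  induction P using Quotient.inductionOn with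
  | h a => induction Q' using Quotient.inductionOn with
    | h b => induction R using Quotient.inductionOn with
      | h c =>
        rw [← Path.Homotopic.comp_lift, ← Path.Homotopic.comp_lift,
          ← Path.Homotopic.comp_lift, ← Path.Homotopic.comp_lift]
        exact Quotient.sound ⟨Path.Homotopy.transAssoc a b c⟩

theorem qcomp_symm {x y : X} (η : Path x y) :
    (⟦η⟧ : Q x y) ⊚ (⟦η.symm⟧ : Q y x) = (⟦Path.refl x⟧ : Q x x) := by
  rw [← Path.Homotopic.comp_lift]
  exact Quotient.sound ⟨(Path.Homotopy.reflTransSymm η).symm⟩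

theorem qsymm_comp {x y : X} (η : Path x y) :
    (⟦η.symm⟧ : Q y x) ⊚ (⟦η⟧ : Q x y) = (⟦Path.refl y⟧ : Q y y) := by
  rw [← Path.Homotopic.comp_lift]
  exact Quotient.sound ⟨(Path.Homotopy.reflSymmTrans η).symm⟩

theorem qcancel_right {x y z : X} (η : Path y z) (P P' : Q x y)
    (h : P ⊚ (⟦η⟧ : Q y z) = P' ⊚ (⟦η⟧ : Q y z)) : P = P' := by
  have := congrArg (fun R => R ⊚ (⟦η.symm⟧ : Q z y)) h
  simpa only [qassoc, qcomp_symm, qcomp_refl] using this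

theorem qcancel_left {x y z : X} (η : Path x y) (P P' : Q y z)
    (h : (⟦η⟧ : Q x y) ⊚ P = (⟦η⟧ : Q x y) ⊚ P') : P = P' := by
  have := congrArg (fun R => (⟦η.symm⟧ : Q y x) ⊚ R) h
  simpa only [← qassoc, qsymm_comp, qrefl_comp] using this

/-- The total space of the universal cover: points of `X` together with a homotopy
class of paths from the basepoint. -/
def Tot (X : Type) [TopologicalSpace X] (x₀ : X) : Type :=
  Σ x : X, Q x₀ x

variable (x₀)

def proj : Tot X x₀ → X := Sigma.fst

variable {x₀}

/-- The sheet through `e` over the set `U`. -/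
def sheet (e : Tot X x₀) (U : Set X) : Set (Tot X x₀) :=
  { e' | ∃ η : Path e.1 e'.1, Set.range η ⊆ U ∧ e'.2 = e.2 ⊚ (⟦η⟧ : Q e.1 e'.1) }

variable (x₀) in
def basis : Set (Set (Tot X x₀)) :=
  { s | ∃ e U, IsOpen U ∧ e.1 ∈ U ∧ s = sheet e U }

instance : TopologicalSpace (Tot X x₀) := generateFrom (basis x₀)

theorem mem_sheet_self {e : Tot X x₀} {U : Set X} (h : e.1 ∈ U) : e ∈ sheet e U := by
  refine ⟨Path.refl e.1, ?_, (qcomp_refl e.2).symm⟩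
  rintro y ⟨t, rfl⟩; simpa using h

theorem sheet_mono {e : Tot X x₀} {U V : Set X} (h : U ⊆ V) : sheet e U ⊆ sheet e V := by
  rintro e' ⟨η, hη, he⟩; exact ⟨η, hη.trans h, he⟩

theorem fst_mem_of_mem_sheet {e e' : Tot X x₀} {U : Set X} (h : e' ∈ sheet e U) : e'.1 ∈ U := by
  obtain ⟨η, hη, -⟩ := h
  exact hη ⟨1, by simp⟩

theorem sheet_trans {e e' : Tot X x₀} {U : Set X} (h : e' ∈ sheet e U) :
    sheet e' U ⊆ sheet e U := by
  obtain ⟨η, hη, he⟩ := h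
  rintro e'' ⟨θ, hθ, he''⟩
  refine ⟨η.trans θ, ?_, ?_⟩
  · rw [Path.trans_range]; exact union_subset hη hθ
  · rw [he'', he, Path.Homotopic.comp_lift, qassoc]

theorem sheet_symm {e e' : Tot X x₀} {U : Set X} (h : e' ∈ sheet e U) : e ∈ sheet e' U := by
  obtain ⟨η, hη, he⟩ := h
  refine ⟨η.symm, by rwa [Path.symm_range], ?_⟩
  rw [he, qassoc, qcomp_symm, qcomp_refl]

theorem isBasis : IsTopologicalBasis (basis x₀) := by
  refine ⟨?_, ?_, rfl⟩
  · rintro t₁ ⟨e₁, U₁, hU₁, he₁, rfl⟩ t₂ ⟨e₂, U₂, hU₂, he₂, rfl⟩ e ⟨h₁, h₂⟩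
    refine ⟨sheet e (U₁ ∩ U₂), ⟨e, U₁ ∩ U₂, hU₁.inter hU₂, ⟨fst_mem_of_mem_sheet h₁,
      fst_mem_of_mem_sheet h₂⟩, rfl⟩, mem_sheet_self ⟨fst_mem_of_mem_sheet h₁,
      fst_mem_of_mem_sheet h₂⟩, ?_⟩
    exact subset_inter
      ((sheet_mono inter_subset_left).trans (sheet_trans h₁))
      ((sheet_mono inter_subset_right).trans (sheet_trans h₂))
  · refine eq_univ_of_forall fun e => ?_
    exact mem_sUnion.2 ⟨sheet e univ, ⟨e, univ, isOpen_univ, mem_univ _, rfl⟩,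
      mem_sheet_self (mem_univ _)⟩

theorem isOpen_sheet {e : Tot X x₀} {U : Set X} (hU : IsOpen U) (he : e.1 ∈ U) :
    IsOpen (sheet e U) :=
  isBasis.isOpen ⟨e, U, hU, he, rfl⟩

theorem continuous_proj : Continuous (proj x₀ : Tot X x₀ → X) := by
  refine continuous_def.2 fun V hV => ?_
  have : (proj x₀) ⁻¹' V = ⋃ e ∈ (proj x₀) ⁻¹' V, sheet e V := by
    ext e
    constructor
    · intro he; exact mem_biUnion he (mem_sheet_self he)
    · simp only [mem_iUnion]
      rintro ⟨e', he', hm⟩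
      exact fst_mem_of_mem_sheet hm
  rw [this]
  exact isOpen_biUnion fun e he => isOpen_sheet hV he

/-- A good open set: open, path connected, and loops inside it are null-homotopic in `X`. -/
def IsGood (U : Set X) : Prop :=
  IsOpen U ∧ IsPathConnected U ∧
    ∀ (y : X) (γ : Path y y), Set.range γ ⊆ U → γ.Homotopic (Path.refl y)

theorem good_homotopic {U : Set X} (hU : IsGood U) {a b : X} (η₁ η₂ : Path a b)
    (h₁ : Set.range η₁ ⊆ U) (h₂ : Set.range η₂ ⊆ U) :
    (⟦η₁⟧ : Q a b) = ⟦η₂⟧ := by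
  have hloop : (η₁.trans η₂.symm).Homotopic (Path.refl a) := by
    refine hU.2.2 a _ ?_
    rw [Path.trans_range, Path.symm_range]
    exact union_subset h₁ h₂
  have h1 : (⟦η₁⟧ : Q a b) ⊚ (⟦η₂.symm⟧ : Q b a) = (⟦Path.refl a⟧ : Q a a) := by
    rw [← Path.Homotopic.comp_lift]; exact Quotient.sound hloop
  have := congrArg (fun R => R ⊚ (⟦η₂⟧ : Q a b)) h1
  simpa only [qassoc, qsymm_comp, qcomp_refl, qrefl_comp] using this

theorem injOn_sheet {U : Set X} (hU : IsGood U) (e : Tot X x₀) :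
    Set.InjOn (proj x₀) (sheet e U) := by
  rintro ⟨y₁, c₁⟩ ⟨η₁, hr₁, hc₁⟩ ⟨y₂, c₂⟩ ⟨η₂, hr₂, hc₂⟩ h
  dsimp [proj] at h
  subst h
  have : c₁ = c₂ := by
    dsimp only at hc₁ hc₂
    rw [hc₁, hc₂, good_homotopic hU η₁ η₂ hr₁ hr₂]
  rw [this]

theorem image_sheet {U : Set X} (hU : IsGood U) {e : Tot X x₀} (he : e.1 ∈ U) :
    proj x₀ '' sheet e U = U := by
  apply Subset.antisymm
  · rintro y ⟨e', he', rfl⟩; exact fst_mem_of_mem_sheet he'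
  · intro y hy
    obtain ⟨η, hη⟩ := (hU.2.1.joinedIn e.1 he y hy)
    exact ⟨⟨y, e.2 ⊚ (⟦η⟧ : Q e.1 y)⟩, ⟨η, fun z ⟨t, ht⟩ => ht ▸ hη t, rfl⟩, rfl⟩

theorem isOpen_singleton_fiber {U : Set X} (hU : IsGood U) {x : X} (hx : x ∈ U)
    (f : ↥(proj x₀ ⁻¹' {x})) : IsOpen ({f} : Set ↥(proj x₀ ⁻¹' {x})) := by
  have hfx : (f : Tot X x₀).1 ∈ U := by
    have : proj x₀ f.1 = x := f.2
    rwa [show (f : Tot X x₀).1 = x from this]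
  have hset : ({f} : Set ↥(proj x₀ ⁻¹' {x})) = Subtype.val ⁻¹' sheet f.1 U := by
    ext g
    constructor
    · rintro rfl; exact mem_sheet_self hfx
    · intro hg
      have h1 : proj x₀ g.1 = proj x₀ f.1 := by rw [f.2, g.2]
      exact Subtype.ext (injOn_sheet hU f.1 hg (mem_sheet_self hfx) h1)
  rw [hset]
  exact (isOpen_sheet hU.1 hfx).preimage continuous_subtype_val

theorem discreteTopology_fiber {U : Set X} (hU : IsGood U) {x : X} (hx : x ∈ U) :
    DiscreteTopology ↥(proj x₀ ⁻¹' {x}) :=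
  discreteTopology_iff_isOpen_singleton.mpr (isOpen_singleton_fiber hU hx)

/-- Extract the class of a fiber element as a class ending at `x`. -/
def fc {x : X} (f : ↥(proj x₀ ⁻¹' {x})) : Q x₀ x := f.2 ▸ (f : Tot X x₀).2

theorem fc_spec {x : X} (f : ↥(proj x₀ ⁻¹' {x})) : (f : Tot X x₀) = ⟨x, fc f⟩ := by
  obtain ⟨⟨y, c⟩, h⟩ := f
  have h' : y = x := h
  subst h'
  rfl

theorem fc_mk {x : X} (c : Q x₀ x) (h) : fc (⟨⟨x, c⟩, h⟩ : ↥(proj x₀ ⁻¹' {x})) = c := rfl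

variable [PathConnectedSpace X] [LocallyPathConnectedSpace X]

/-- The local trivialization of the universal cover over a good set. -/
noncomputable def triv {U : Set X} (hU : IsGood U) {x : X} (hx : x ∈ U) :
    {t : Bundle.Trivialization (↥(proj x₀ ⁻¹' {x})) (proj x₀ : Tot X x₀ → X) // x ∈ t.baseSet} := by
  classical
  -- chosen paths from x to points of U, inside U
  set cp : ∀ y, y ∈ U → Path x y := fun y hy => (hU.2.1.joinedIn x hx y hy).somePath with hcp
  have cp_range : ∀ y hy, Set.range (cp y hy) ⊆ U := by
    rintro y hy z ⟨t, rfl⟩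
    exact (hU.2.1.joinedIn x hx y hy).somePath_mem t
  -- the fiber component of the trivialization
  set fib : Tot X x₀ → ↥(proj x₀ ⁻¹' {x}) := fun e =>
    if h : e.1 ∈ U then ⟨⟨x, e.2 ⊚ (⟦(cp e.1 h).symm⟧ : Q e.1 x)⟩, rfl⟩
    else ⟨⟨x, ⟦PathConnectedSpace.somePath x₀ x⟧⟩, rfl⟩ with hfib
  have fib_pos : ∀ (a : Tot X x₀) (h : a.1 ∈ U),
      fib a = ⟨⟨x, a.2 ⊚ (⟦(cp a.1 h).symm⟧ : Q a.1 x)⟩, rfl⟩ := fun a h => dif_pos h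
  set tvF : Tot X x₀ → X × ↥(proj x₀ ⁻¹' {x}) := fun e => (e.1, fib e) with htvF
  set invF : X × ↥(proj x₀ ⁻¹' {x}) → Tot X x₀ := fun yf =>
    if h : yf.1 ∈ U then ⟨yf.1, fc yf.2 ⊚ (⟦cp yf.1 h⟧ : Q x yf.1)⟩
    else (yf.2 : Tot X x₀) with hinvF
  have inv_pos : ∀ (yf : X × ↥(proj x₀ ⁻¹' {x})) (h : yf.1 ∈ U),
      invF yf = ⟨yf.1, fc yf.2 ⊚ (⟦cp yf.1 h⟧ : Q x yf.1)⟩ := fun yf h => dif_pos h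
  have fib_const : ∀ (e e' : Tot X x₀), e.1 ∈ U → e' ∈ sheet e U → fib e' = fib e := by
    rintro e e' he ⟨η, hη, hc⟩
    have he' : e'.1 ∈ U := fst_mem_of_mem_sheet ⟨η, hη, hc⟩
    have h1 := fib_pos e he
    have h2 := fib_pos e' he'
    rw [h1, h2]
    refine Subtype.ext ?_
    dsimp only
    have : e'.2 ⊚ (⟦(cp e'.1 he').symm⟧ : Q e'.1 x) = e.2 ⊚ (⟦(cp e.1 he).symm⟧ : Q e.1 x) := by
      rw [hc, qassoc, ← Path.Homotopic.comp_lift]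
      congr 1
      apply good_homotopic hU
      · rw [Path.trans_range, Path.symm_range]
        exact union_subset hη (cp_range _ he')
      · rw [Path.symm_range]; exact cp_range _ he
    rw [this]
  refine ⟨{
    toFun := tvF
    invFun := invF
    source := proj x₀ ⁻¹' U
    target := U ×ˢ univ
    map_source' := fun e he => ⟨he, mem_univ _⟩
    map_target' := fun yf hyf => ?_
    left_inv' := fun e he => ?_
    right_inv' := fun yf hyf => ?_
    open_source := continuous_proj.isOpen_preimage _ hU.1
    open_target := hU.1.prod isOpen_univ
    continuousOn_toFun := fun e he => ?_
    continuousOn_invFun := fun yf hyf => ?_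
    baseSet := U
    open_baseSet := hU.1
    source_eq := rfl
    target_eq := rfl
    proj_toFun := fun e _ => rfl }, hx⟩
  · -- map_target'
    rw [inv_pos yf hyf.1]
    exact hyf.1
  · -- left_inv'
    have he : e.1 ∈ U := he
    have h1 : (tvF e).1 ∈ U := he
    rw [inv_pos (tvF e) h1]
    show (⟨e.1, fc (fib e) ⊚ (⟦cp e.1 he⟧ : Q x e.1)⟩ : Tot X x₀) = e
    rw [fib_pos e he]
    erw [fc_mk]
    rw [qassoc, qsymm_comp, qcomp_refl]
    exact Sigma.eta e
  · -- right_inv'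
    obtain ⟨y, f⟩ := yf
    have hy : y ∈ U := hyf.1
    rw [inv_pos (y, f) hy]
    have hy2 : (⟨y, fc f ⊚ (⟦cp y hy⟧ : Q x y)⟩ : Tot X x₀).1 ∈ U := hy
    show tvF _ = (y, f)
    rw [htvF]
    refine Prod.ext rfl ?_
    show fib ⟨y, fc f ⊚ (⟦cp y hy⟧ : Q x y)⟩ = f
    rw [fib_pos _ hy2]
    refine Subtype.ext ?_
    rw [fc_spec f]
    show (⟨x, (fc f ⊚ (⟦cp y hy⟧ : Q x y)) ⊚ (⟦(cp y hy).symm⟧ : Q y x)⟩ : Tot X x₀)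
      = ⟨x, fc f⟩
    rw [qassoc, qcomp_symm, qcomp_refl]
  · -- continuousOn_toFun
    have he : e.1 ∈ U := he
    apply ContinuousAt.continuousWithinAt
    have hev : tvF =ᶠ[nhds e] (fun e' => ((e' : Tot X x₀).1, fib e)) := by
      filter_upwards [(isOpen_sheet hU.1 he).mem_nhds (mem_sheet_self he)] with e' he'
      rw [htvF]
      dsimp only
      rw [fib_const e e' he he']
    refine ContinuousAt.congr ?_ hev.symm
    exact (continuous_proj.prodMk continuous_const).continuousAt
  · -- continuousOn_invFun
    obtain ⟨y, f⟩ := yf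
    have hy : y ∈ U := hyf.1
    show ContinuousWithinAt invF (U ×ˢ univ) (y, f)
    apply ContinuousAt.continuousWithinAt
    rw [continuousAt_def]
    intro A hA
    rw [inv_pos (y, f) hy] at hA
    obtain ⟨T, hTA, hT, hmemT⟩ := mem_nhds_iff.1 hA
    obtain ⟨s, ⟨e₁, U₁, hU₁, he₁, rfl⟩, hmem₁, hsub₁⟩ := isBasis.exists_subset_of_mem_open hmemT hT
    set e₀ : Tot X x₀ := ⟨y, fc f ⊚ (⟦cp y hy⟧ : Q x y)⟩ with he₀
    have hyU₁ : y ∈ U₁ := fst_mem_of_mem_sheet hmem₁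
    set V : Set X := pathComponentIn (U ∩ U₁) y with hV
    have hyV : y ∈ V := mem_pathComponentIn_self ⟨hy, hyU₁⟩
    have hVopen : IsOpen V := (hU.1.inter hU₁).pathComponentIn y
    have hVU : V ⊆ U ∩ U₁ := pathComponentIn_subset
    have key : ∀ y' ∈ V, invF (y', f) ∈ sheet e₀ U₁ := by
      intro y' hy'
      have hy'U : y' ∈ U := (hVU hy').1
      have hyy' : JoinedIn (U ∩ U₁) y y' := hy'
      obtain ⟨η, hηV⟩ := hyy'
      have hηU₁ : Set.range η ⊆ U₁ := by
        rintro z ⟨t, rfl⟩; exact (hηV t).2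
      have hηU : Set.range η ⊆ U := by
        rintro z ⟨t, rfl⟩; exact (hηV t).1
      rw [inv_pos (y', f) hy'U, he₀]
      refine ⟨η, hηU₁, ?_⟩
      show fc f ⊚ (⟦cp y' hy'U⟧ : Q x y') =
        (fc f ⊚ (⟦cp y hy⟧ : Q x y)) ⊚ (⟦η⟧ : Q y y')
      rw [qassoc, ← Path.Homotopic.comp_lift]
      congr 1
      apply good_homotopic hU
      · exact cp_range _ hy'U
      · rw [Path.trans_range]
        exact union_subset (cp_range _ hy) hηU
    have hWnhds : V ×ˢ ({f} : Set ↥(proj x₀ ⁻¹' {x})) ∈ nhds (y, f) :=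
      prod_mem_nhds (hVopen.mem_nhds hyV)
        ((isOpen_singleton_fiber hU hx f).mem_nhds rfl)
    refine Filter.mem_of_superset hWnhds ?_
    rintro ⟨y', f'⟩ ⟨hy', hf'⟩
    have hf' : f' = f := hf'
    subst hf'
    exact hTA (hsub₁ (sheet_trans hmem₁ (key y' hy')))

theorem isCoveringMap (hX : ∀ x : X, ∃ U, IsGood U ∧ x ∈ U) :
    IsCoveringMap (proj x₀ : Tot X x₀ → X) := by
  haveI : ∀ x, DiscreteTopology ↥(proj x₀ ⁻¹' {x}) := fun x =>
    discreteTopology_fiber (hX x).choose_spec.1 (hX x).choose_spec.2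
  exact IsCoveringMap.mk _ (fun x => ↥(proj x₀ ⁻¹' {x}))
    (fun x => (triv (hX x).choose_spec.1 (hX x).choose_spec.2).1)
    (fun x => (triv (hX x).choose_spec.1 (hX x).choose_spec.2).2)

theorem exists_good [LocallyPathConnectedSpace X]
    (hX : ∀ x : X, ∃ U ∈ nhds x, ∀ (y : X) (γ : Path y y),
      Set.range γ ⊆ U → Path.Homotopic γ (Path.refl y)) (x : X) :
    ∃ U, IsGood U ∧ x ∈ U := by
  obtain ⟨U₀, hU₀, hloop⟩ := hX x
  obtain ⟨V, hVU₀, hVopen, hxV⟩ := mem_nhds_iff.1 hU₀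
  refine ⟨pathComponentIn V x, ⟨hVopen.pathComponentIn x,
    isPathConnected_pathComponentIn hxV, fun y γ hγ => hloop y γ
      (hγ.trans (pathComponentIn_subset.trans hVU₀))⟩, mem_pathComponentIn_self hxV⟩

open unitInterval in
theorem simplyConnected_square : SimplyConnectedSpace (I × I) := by
  have h : Convex ℝ ((Set.Icc (0:ℝ) 1) ×ˢ (Set.Icc (0:ℝ) 1)) :=
    (convex_Icc 0 1).prod (convex_Icc 0 1)
  have h2 : ContractibleSpace ↥((Set.Icc (0:ℝ) 1) ×ˢ (Set.Icc (0:ℝ) 1)) :=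
    h.contractibleSpace ⟨(0, 0), by simp⟩
  haveI := h2
  haveI h3 : ContractibleSpace (I × I) :=
    (Homeomorph.Set.prod (Set.Icc (0:ℝ) 1) (Set.Icc (0:ℝ) 1)).symm.contractibleSpace
  infer_instance

open unitInterval

/-- straight-line path in the unit interval -/
def iline (a b : I) : Path a b where
  toFun t := ⟨(1 - (t:ℝ)) * a + t * b, by
    constructor
    · have h0 : (0:ℝ) ≤ 1 - t := by linarith [t.2.2]
      exact add_nonneg (mul_nonneg h0 a.2.1) (mul_nonneg t.2.1 b.2.1)
    · nlinarith [a.2.2, b.2.2, t.2.1, t.2.2, a.2.1, b.2.1]⟩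
  continuous_toFun := by
    refine Continuous.subtype_mk ?_ _
    fun_prop
  source' := Subtype.ext (by simp)
  target' := Subtype.ext (by simp)

theorem iline_dist (a b : I) (t : I) : dist (iline a b t) a ≤ dist b a := by
  have h1 : ((iline a b t : I) : ℝ) - a = t * ((b : ℝ) - a) := by
    simp [iline]; ring
  rw [Subtype.dist_eq, Subtype.dist_eq, Real.dist_eq, Real.dist_eq, h1, abs_mul]
  calc |(t:ℝ)| * |(b:ℝ) - a| ≤ 1 * |(b:ℝ) - a| := by
        apply mul_le_mul_of_nonneg_right _ (abs_nonneg _)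
        rw [abs_of_nonneg t.2.1]; exact t.2.2
    _ = |(b:ℝ) - a| := one_mul _

/-- straight-line path in the unit square -/
def sqseg (q q' : I × I) : Path q q' := Path.prod (iline q.1 q'.1) (iline q.2 q'.2)

theorem sqseg_dist (q q' : I × I) (t : I) : dist (sqseg q q' t) q ≤ dist q' q := by
  rw [show sqseg q q' t = (iline q.1 q'.1 t, iline q.2 q'.2 t) from rfl]
  rw [Prod.dist_eq, Prod.dist_eq]
  exact max_le_max (iline_dist _ _ _) (iline_dist _ _ _)

/-- vertical path in the unit square from the bottom edge -/
def vpath (q : I × I) : Path ((q.1, (0:I)) : I × I) q := Path.prod (Path.refl q.1) (iline 0 q.2)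

theorem vpath_apply (q : I × I) (t : I) : vpath q t = (q.1, iline 0 q.2 t) := rfl

/-- Two paths from the basepoint that factor through paths in the square starting on the
bottom edge are homotopic. -/
theorem square_hom (F : C(I × I, X)) (hF : ∀ s, F (s, 0) = x₀) {w₁ w₂ : I} {q : I × I}
    (a : Path ((w₁, 0) : I × I) q) (b : Path ((w₂, 0) : I × I) q)
    (P P' : Path x₀ (F q)) (hP : ∀ t, P t = F (a t)) (hP' : ∀ t, P' t = F (b t)) :
    P.Homotopic P' := by
  have key : ∀ (w : I) (c d : Path ((w, 0) : I × I) q) (R S : Path x₀ (F q)),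
      (∀ t, R t = F (c t)) → (∀ t, S t = F (d t)) → R.Homotopic S := by
    intro w c d R S hR hS
    have hx : x₀ = F (w, 0) := (hF w).symm
    subst hx
    have hRc : R = c.map F.continuous := Path.ext (funext hR)
    have hSd : S = d.map F.continuous := Path.ext (funext hS)
    rw [hRc, hSd]
    have : SimplyConnectedSpace (I × I) := simplyConnected_square
    exact (SimplyConnectedSpace.paths_homotopic c d).map F
  -- connect the two bottom-edge basepoints by a horizontal segment
  set hseg : Path ((w₁, 0) : I × I) ((w₂, 0) : I × I) := Path.prod (iline w₁ w₂) (Path.refl 0)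
    with hhseg
  have hP'' : ∀ t, ((Path.refl x₀).trans P') t = F ((hseg.trans b) t) := by
    intro t
    rw [Path.trans_apply, Path.trans_apply]
    split_ifs with h
    · have hs : ∀ u : I, F (hseg u) = x₀ := fun u => hF (iline w₁ w₂ u)
      show Path.refl x₀ _ = F (hseg _)
      simp only [Path.refl_apply]
      exact (hs _).symm
    · exact hP' _
  have h1 : P.Homotopic ((Path.refl x₀).trans P') := key w₁ a (hseg.trans b) _ _ hP hP''
  exact h1.trans ⟨Path.Homotopy.reflTrans P'⟩

section Lift

/-- canonical path from the basepoint to `F q`, along the vertical segment. -/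
def vert (F : C(I × I, X)) (hF : ∀ s, F (s, 0) = x₀) (q : I × I) : Path x₀ (F q) where
  toFun u := F (vpath q u)
  continuous_toFun := F.continuous.comp (vpath q).continuous_toFun
  source' := by
    show F (vpath q 0) = x₀
    rw [vpath_apply]
    have h0 : iline 0 q.2 0 = 0 := (iline 0 q.2).source'
    rw [h0]
    exact hF q.1
  target' := by
    show F (vpath q 1) = F q
    rw [vpath_apply]
    have h1 : iline 0 q.2 1 = q.2 := (iline 0 q.2).target'
    rw [h1]

theorem vert_apply (F : C(I × I, X)) (hF : ∀ s, F (s, 0) = x₀) (q : I × I) (u : I) :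
    vert F hF q u = F (q.1, iline 0 q.2 u) := rfl

/-- The canonical lift of `F` to the total space. -/
def toTot (F : C(I × I, X)) (hF : ∀ s, F (s, 0) = x₀) : I × I → Tot X x₀ :=
  fun q => ⟨F q, ⟦vert F hF q⟧⟩

variable (F : C(I × I, X)) (hF : ∀ s, F (s, 0) = x₀)

theorem continuous_toTot : Continuous (toTot F hF) := by
  have hgen : ∀ s ∈ basis x₀, IsOpen (toTot F hF ⁻¹' s) := by
    rintro s ⟨e, U, hUopen, heU, rfl⟩
    rw [Metric.isOpen_iff]
    intro q hq
    have hFqU : F q ∈ U := fst_mem_of_mem_sheet hq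
    set V : Set X := pathComponentIn U (F q) with hV
    have hVopen : IsOpen V := hUopen.pathComponentIn _
    have hVU : V ⊆ U := pathComponentIn_subset
    have hqV : q ∈ F ⁻¹' V := mem_pathComponentIn_self hFqU
    obtain ⟨ε, hε, hball⟩ := Metric.isOpen_iff.1 (hVopen.preimage F.continuous) q hqV
    refine ⟨ε, hε, fun q' hq' => ?_⟩
    have hsq : ∀ t : I, sqseg q q' t ∈ F ⁻¹' V := by
      intro t
      apply hball
      rw [Metric.mem_ball]
      exact lt_of_le_of_lt (sqseg_dist q q' t) hq'
    set η : Path (F q) (F q') := (sqseg q q').map F.continuous with hη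
    have hηU : Set.range η ⊆ U := by
      rintro z ⟨t, rfl⟩
      exact hVU (hsq t)
    apply sheet_trans hq
    refine ⟨η, hηU, ?_⟩
    show (⟦vert F hF q'⟧ : Q x₀ (F q')) =
      (⟦vert F hF q⟧ : Q x₀ (F q)) ⊚ (⟦η⟧ : Q (F q) (F q'))
    rw [← Path.Homotopic.comp_lift]
    refine Quotient.sound ?_
    refine square_hom F hF (vpath q') ((vpath q).trans (sqseg q q')) _ _ (fun t => rfl) ?_
    intro t
    rw [Path.trans_apply, Path.trans_apply]
    split_ifs with h
    · rfl
    · rfl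
  exact continuous_generateFrom_iff.2 hgen

end Lift

theorem iline_zero_zero (t : I) : iline (0:I) 0 t = 0 := Subtype.ext (by simp [iline])

theorem iline_zero_one (t : I) : iline (0:I) 1 t = t := Subtype.ext (by simp [iline])

theorem tot_eq {x y : X} (h : x = y) (P : Path x₀ x) (P' : Path x₀ y)
    (hPQ : ∀ t, P t = P' t) : (⟨x, ⟦P⟧⟩ : Tot X x₀) = ⟨y, ⟦P'⟧⟩ := by
  subst h
  rw [show P = P' from Path.ext (funext hPQ)]

variable (x₀) in
/-- the canonical basepoint of the total space -/
def basept : Tot X x₀ := ⟨x₀, ⟦Path.refl x₀⟧⟩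

theorem joined_base (e : Tot X x₀) : Joined (basept x₀) e := by
  obtain ⟨x, c⟩ := e
  induction c using Quotient.inductionOn with
  | h γ =>
  set F : C(I × I, X) := ⟨fun q => γ q.2, γ.continuous_toFun.comp continuous_snd⟩ with hFdef
  have hF : ∀ s, F (s, 0) = x₀ := fun s => γ.source
  refine ⟨⟨⟨fun t => toTot F hF (0, t),
    (continuous_toTot F hF).comp (continuous_const.prodMk continuous_id)⟩, ?_, ?_⟩⟩
  · show toTot F hF (0, 0) = basept x₀
    refine tot_eq γ.source (vert F hF (0,0)) (Path.refl x₀) fun t => ?_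
    rw [vert_apply, Path.refl_apply]
    show γ (iline 0 0 t) = x₀
    rw [iline_zero_zero]
    exact γ.source
  · show toTot F hF (0, 1) = ⟨x, ⟦γ⟧⟩
    refine tot_eq γ.target (vert F hF (0,1)) γ fun t => ?_
    rw [vert_apply]
    show γ (iline 0 1 t) = γ t
    rw [iline_zero_one]

theorem pathConnectedTot : PathConnectedSpace (Tot X x₀) :=
  ⟨⟨basept x₀⟩, fun a b => (joined_base a).symm.trans (joined_base b)⟩

theorem loop_trivial (hcov : IsCoveringMap (proj x₀ : Tot X x₀ → X))
    (α : Path (basept x₀) (basept x₀)) : α.Homotopic (Path.refl (basept x₀)) := by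
  set γ : Path x₀ x₀ := α.map continuous_proj with hγdef
  set F : C(I × I, X) := ⟨fun q => γ q.2, γ.continuous_toFun.comp continuous_snd⟩ with hFdef
  have hF : ∀ s, F (s, 0) = x₀ := fun s => γ.source
  set Λ : I → Tot X x₀ := fun t => toTot F hF (0, t) with hΛdef
  have hΛ0 : Λ 0 = basept x₀ := by
    refine tot_eq γ.source (vert F hF (0,0)) (Path.refl x₀) fun t => ?_
    rw [vert_apply, Path.refl_apply]
    show γ (iline 0 0 t) = x₀
    rw [iline_zero_zero]
    exact γ.source
  have hΛ1 : Λ 1 = ⟨x₀, ⟦γ⟧⟩ := by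
    refine tot_eq γ.target (vert F hF (0,1)) γ fun t => ?_
    rw [vert_apply]
    show γ (iline 0 1 t) = γ t
    rw [iline_zero_one]
  have funeq : ⇑α = Λ := by
    refine hcov.eq_of_comp_eq α.continuous_toFun
      ((continuous_toTot F hF).comp (continuous_const.prodMk continuous_id))
      (funext fun t => rfl) 0 ?_
    rw [hΛ0]
    exact α.source
  have hend : (⟦γ⟧ : Q x₀ x₀) = ⟦Path.refl x₀⟧ := by
    have h1 : (⟨x₀, ⟦γ⟧⟩ : Tot X x₀) = basept x₀ := by
      rw [← hΛ1, ← congrFun funeq 1]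
      exact α.target
    exact eq_of_heq (Sigma.mk.inj_iff.1 h1).2
  have hγrefl : γ.Homotopic (Path.refl x₀) := Quotient.exact hend
  obtain ⟨H⟩ := hγrefl
  set HC : C(I × I, X) := ⟨fun q => H q, H.continuous⟩ with hHCdef
  have hHC : ∀ s, HC (s, 0) = x₀ := fun s => H.source s
  -- every horizontal slice of `H` is null-homotopic
  have hslice : ∀ s : I, (⟦H.eval s⟧ : Q x₀ x₀) = ⟦Path.refl x₀⟧ := by
    intro s
    have hJ : γ.Homotopic (H.eval s) := by
      refine ⟨{ toFun := fun rt => H (rt.1 * s, rt.2)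
                continuous_toFun := ?_
                map_zero_left := ?_
                map_one_left := ?_
                prop' := ?_ }⟩
      · exact H.continuous.comp
          ((((continuous_subtype_val.comp continuous_fst).mul
            continuous_const).subtype_mk _).prodMk continuous_snd)
      · intro t
        show H ((0:I) * s, t) = γ t
        rw [show (0:I) * s = 0 from Subtype.ext (zero_mul _)]
        exact H.apply_zero t
      · intro t
        show H ((1:I) * s, t) = (H.eval s) t
        rw [show (1:I) * s = s from Subtype.ext (one_mul _)]
        rfl
      · intro r x hx
        rcases hx with rfl | hx
        · show H (r * s, 0) = γ 0
          rw [H.source, γ.source]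
        · rw [mem_singleton_iff] at hx
          subst hx
          show H (r * s, 1) = γ 1
          rw [H.target, γ.target]
    exact Quotient.sound (hJ.symm.trans (Quotient.exact hend))
  set K := toTot HC hHC with hKdef
  refine ⟨{ toFun := K
            continuous_toFun := continuous_toTot HC hHC
            map_zero_left := ?_
            map_one_left := ?_
            prop' := ?_ }⟩
  · intro t
    show K (0, t) = α t
    have h1 : K (0, t) = Λ t := by
      refine tot_eq (H.apply_zero t) (vert HC hHC (0,t)) (vert F hF (0,t)) fun u => ?_
      rw [vert_apply, vert_apply]
      exact H.apply_zero _
    rw [h1, ← congrFun funeq t]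
  · intro t
    show K (1, t) = Path.refl (basept x₀) t
    have h1 : K (1, t) = basept x₀ := by
      refine tot_eq (H.apply_one t) (vert HC hHC (1,t)) (Path.refl x₀) fun u => ?_
      rw [vert_apply]
      exact H.apply_one _
    rw [h1]
    rfl
  · intro s x hx
    rcases hx with rfl | hx
    · show K (s, 0) = α 0
      have h1 : K (s, 0) = basept x₀ := by
        refine tot_eq (H.source s) (vert HC hHC (s,0)) (Path.refl x₀) fun u => ?_
        rw [vert_apply, Path.refl_apply]
        show H (s, iline 0 0 u) = x₀
        rw [iline_zero_zero]
        exact H.source s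
      rw [h1, α.source]
    · rw [mem_singleton_iff] at hx
      subst hx
      show K (s, 1) = α 1
      have h1 : K (s, 1) = ⟨x₀, ⟦H.eval s⟧⟩ := by
        refine tot_eq (H.target s) (vert HC hHC (s,1)) (H.eval s) fun u => ?_
        rw [vert_apply]
        show H (s, iline 0 1 u) = (H.eval s) u
        rw [iline_zero_one]
        rfl
      rw [h1, α.target]
      show (⟨x₀, ⟦H.eval s⟧⟩ : Tot X x₀) = basept x₀
      rw [hslice s]
      rfl

theorem paths_homotopic_aux {Y : Type} [TopologicalSpace Y] (y₀ : Y)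
    (hconn : ∀ y : Y, Joined y₀ y)
    (hloop : ∀ l : Path y₀ y₀, l.Homotopic (Path.refl y₀))
    {u v : Y} (a b : Path u v) : a.Homotopic b := by
  obtain ⟨δ⟩ := hconn u
  obtain ⟨δ'⟩ := hconn v
  have h1 : (⟦δ.trans (a.trans δ'.symm)⟧ : Q y₀ y₀) = ⟦δ.trans (b.trans δ'.symm)⟧ :=
    (Quotient.sound (hloop _)).trans (Quotient.sound (hloop _)).symm
  simp only [Path.Homotopic.comp_lift] at h1
  exact Quotient.exact (qcancel_right δ'.symm _ _ (qcancel_left δ _ _ h1))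

theorem simplyConnectedTot (hcov : IsCoveringMap (proj x₀ : Tot X x₀ → X)) :
    SimplyConnectedSpace (Tot X x₀) := by
  rw [simply_connected_iff_paths_homotopic']
  exact ⟨pathConnectedTot, fun a b =>
    paths_homotopic_aux (basept x₀) joined_base (loop_trivial hcov) a b⟩
end UCover

/-- A semi-locally simply connected, connected, locally path-connected space admits a
universal cover: a covering map with simply connected total space. -/
theorem semiLocallySimplyConnected_exists_universal_cover
    (X : Type) [TopologicalSpace X] [ConnectedSpace X] [LocallyPathConnectedSpace X]
    (hX : SemiLocallySimplyConnected X) :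
    ∃ (E : Type) (_ : TopologicalSpace E) (p : E → X),
      IsCoveringMap p ∧ SimplyConnectedSpace E := by
  obtain ⟨x₀⟩ : Nonempty X := inferInstance
  haveI : PathConnectedSpace X := pathConnectedSpace_iff_connectedSpace.2 ‹_›
  have hgood := UCover.exists_good (X := X) hX
  have hcov := UCover.isCoveringMap (x₀ := x₀) hgood
  exact ⟨UCover.Tot X x₀, inferInstance, UCover.proj x₀, hcov, UCover.simplyConnectedTot hcov⟩
end

section
/- Let X be a metric space, x ∈ X, and suppose γ : [0,1] → X is a loop at x that is homotopic (rel basepoint) to a concatenation c₁·γ₁·c₁⁻¹ · … · c_k·γ_k·c_k⁻¹, where each γ_j is a loop and each c_j is a path from x to γ_j(0). If each γ_j is null-homotopic in X via a homotopy with image in a set S_j, and the original homotopy has image in a set S, then γ is null-homotopic in X via a homotopy with image contained in S ∪ S₁ ∪ … ∪ S_k. -/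
open unitInterval

/-- Concatenation of a finite list of loops at `x`. -/
noncomputable def concatLoops {X : Type*} [TopologicalSpace X] {x : X} : List (Path x x) → Path x x
  | [] => Path.refl x
  | p :: ps => p.trans (concatLoops ps)

section Aux

variable {X : Type*} [TopologicalSpace X]

lemma hcomp_mem {x₀ x₁ x₂ : X} {p₀ q₀ : Path x₀ x₁} {p₁ q₁ : Path x₁ x₂}
    (F : Path.Homotopy p₀ q₀) (G : Path.Homotopy p₁ q₁) {T : Set X}
    (hF : ∀ q : I × I, F q ∈ T) (hG : ∀ q : I × I, G q ∈ T) :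
    ∀ q : I × I, F.hcomp G q ∈ T := by
  intro q
  rw [Path.Homotopy.hcomp_apply]
  split_ifs
  · exact hF _
  · exact hG _

lemma htrans_mem {x₀ x₁ : X} {p₀ p₁ p₂ : Path x₀ x₁}
    (F : Path.Homotopy p₀ p₁) (G : Path.Homotopy p₁ p₂) {T : Set X}
    (hF : ∀ q : I × I, F q ∈ T) (hG : ∀ q : I × I, G q ∈ T) :
    ∀ q : I × I, F.trans G q ∈ T := by
  intro q
  rw [Path.Homotopy.trans_apply]
  split_ifs
  · exact hF _
  · exact hG _

lemma refl_mem {x₀ x₁ : X} (p : Path x₀ x₁) (q : I × I) :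
    Path.Homotopy.refl p q ∈ Set.range p :=
  ⟨q.2, rfl⟩

lemma symm_mem {x₀ x₁ : X} {p₀ p₁ : Path x₀ x₁} (F : Path.Homotopy p₀ p₁) {T : Set X}
    (hF : ∀ q : I × I, F q ∈ T) : ∀ q : I × I, F.symm q ∈ T := fun _ => hF _

lemma cast_mem {x₀ x₁ : X} {p₀ p₁ q₀ q₁ : Path x₀ x₁} (F : Path.Homotopy p₀ p₁)
    (h₀ : p₀ = q₀) (h₁ : p₁ = q₁) {T : Set X}
    (hF : ∀ q : I × I, F q ∈ T) : ∀ q : I × I, F.cast h₀ h₁ q ∈ T := fun _ => hF _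

lemma reflTransSymm_mem {x₀ x₁ : X} (p : Path x₀ x₁) (q : I × I) :
    Path.Homotopy.reflTransSymm p q ∈ Set.range p :=
  ⟨_, rfl⟩

lemma transRefl_mem {x₀ x₁ : X} (p : Path x₀ x₁) (q : I × I) :
    Path.Homotopy.transRefl p q ∈ Set.range p :=
  ⟨_, rfl⟩

/-- Null-homotopy of a conjugate `c · γ · c⁻¹` with controlled image. -/
lemma conj_null {x y : X} (c : Path x y) (γ : Path y y) {T : Set X}
    (hc : Set.range c ⊆ T) (G : Path.Homotopy γ (Path.refl y)) (hG : ∀ q : I × I, G q ∈ T) :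
    ∃ K : Path.Homotopy ((c.trans γ).trans c.symm) (Path.refl x), ∀ q : I × I, K q ∈ T := by
  have hcs : ∀ q : I × I, Path.Homotopy.refl c.symm q ∈ T := fun q => by
    have := refl_mem c.symm q
    rw [Path.symm_range] at this
    exact hc this
  have hcr : ∀ q : I × I, Path.Homotopy.refl c q ∈ T := fun q => hc (refl_mem c q)
  refine ⟨((((Path.Homotopy.refl c).hcomp G).hcomp (Path.Homotopy.refl c.symm)).trans
      ((Path.Homotopy.transRefl c).hcomp (Path.Homotopy.refl c.symm))).trans
      (Path.Homotopy.reflTransSymm c).symm, ?_⟩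
  refine htrans_mem _ _ (htrans_mem _ _ ?_ ?_) ?_
  · exact hcomp_mem _ _ (hcomp_mem _ _ hcr hG) hcs
  · exact hcomp_mem _ _ (fun q => hc (transRefl_mem c q)) hcs
  · exact symm_mem _ (fun q => hc (reflTransSymm_mem c q))

lemma concat_null {x : X} (T : Set X) (hx : x ∈ T) :
    ∀ L : List (Path x x),
      (∀ p ∈ L, ∃ K : Path.Homotopy p (Path.refl x), ∀ q : I × I, K q ∈ T) →
      ∃ K : Path.Homotopy (concatLoops L) (Path.refl x), ∀ q : I × I, K q ∈ T
  | [] => fun _ => ⟨(Path.Homotopy.refl (Path.refl x) :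
        Path.Homotopy (concatLoops []) (Path.refl x)), fun q => by
      have := refl_mem (Path.refl x) q
      rw [Path.refl_range] at this
      exact Set.mem_singleton_iff.mp this ▸ hx⟩
  | p :: L => fun h => by
      obtain ⟨Kp, hKp⟩ := h p List.mem_cons_self
      obtain ⟨KL, hKL⟩ := concat_null T hx L (fun r hr => h r (List.mem_cons_of_mem _ hr))
      refine ⟨(Kp.hcomp KL).trans
        ((Path.Homotopy.refl (Path.refl x)).cast Path.refl_trans_refl.symm rfl), ?_⟩
      refine htrans_mem _ _ (hcomp_mem _ _ hKp hKL) ?_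
      refine cast_mem _ _ _ (fun q => ?_)
      have := refl_mem (Path.refl x) q
      rw [Path.refl_range] at this
      rwa [this]

lemma range_mem_concat {x : X} :
    ∀ (L : List (Path x x)) (p : Path x x), p ∈ L →
      Set.range p ⊆ Set.range (concatLoops L)
  | [] => fun p hp => by simp at hp
  | r :: L => fun p hp => by
      show Set.range p ⊆ Set.range (r.trans (concatLoops L))
      rw [Path.trans_range]
      rcases List.mem_cons.mp hp with h | h
      · exact h ▸ Set.subset_union_left
      · exact (range_mem_concat L p h).trans Set.subset_union_right

end Aux

/-- If `γ` is homotopic rel endpoints, with homotopy image in `S`, to the concatenation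
`c₁·γ₁·c₁⁻¹ ⋯ c_k·γ_k·c_k⁻¹`, and each loop `γ_j` is null-homotopic via a homotopy with image
in `S_j`, then `γ` is null-homotopic via a homotopy with image in `S ∪ S₁ ∪ ⋯ ∪ S_k`. -/
theorem nullhomotopic_of_concat_decomposition
    {X : Type*} [MetricSpace X] {x : X} (γ : Path x x)
    (k : ℕ) (y : Fin k → X) (γ' : ∀ j, Path (y j) (y j)) (c : ∀ j, Path x (y j))
    (S : Set X) (Sj : Fin k → Set X)
    (H : Path.Homotopy γ
      (concatLoops (List.ofFn fun j => (((c j).trans (γ' j)).trans (c j).symm))))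
    (hH : ∀ q : I × I, H q ∈ S)
    (hj : ∀ j, ∃ G : Path.Homotopy (γ' j) (Path.refl (y j)), ∀ q : I × I, G q ∈ Sj j) :
    ∃ K : Path.Homotopy γ (Path.refl x), ∀ q : I × I, K q ∈ S ∪ ⋃ j, Sj j := by
  classical
  have hLS : Set.range (concatLoops
      (List.ofFn fun j => (((c j).trans (γ' j)).trans (c j).symm))) ⊆ S := by
    rintro _ ⟨t, rfl⟩
    exact H.toHomotopy.apply_one t ▸ hH (1, t)
  have hx0 : H (0, 0) = x := H.source 0
  have hx : x ∈ S ∪ ⋃ j, Sj j := Or.inl (hx0 ▸ hH (0, 0))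
  have hnull : ∀ p ∈ (List.ofFn fun j => (((c j).trans (γ' j)).trans (c j).symm)),
      ∃ K : Path.Homotopy p (Path.refl x), ∀ q : I × I, K q ∈ S ∪ ⋃ j, Sj j := by
    intro p hp
    obtain ⟨j, hj'⟩ := List.mem_ofFn.mp hp
    obtain ⟨G, hG⟩ := hj j
    have hrange : Set.range (c j) ⊆ S ∪ ⋃ j, Sj j := by
      intro z hz
      refine Or.inl (hLS (range_mem_concat _ _ hp ?_))
      rw [← hj']
      rw [Path.trans_range, Path.trans_range]
      exact Or.inl (Or.inl hz)
    obtain ⟨K, hK⟩ := conj_null (c j) (γ' j) hrange G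
      (fun q => Or.inr (Set.mem_iUnion.mpr ⟨j, hG q⟩))
    exact ⟨hj' ▸ K, by subst hj'; exact hK⟩
  obtain ⟨K, hK⟩ := concat_null _ hx _ hnull
  exact ⟨H.trans K, htrans_mem _ _ (fun q => Or.inl (hH q)) hK⟩
end

section
/- Let D be the closed unit disc and suppose for each i ≥ 1 we have finitely many pairwise disjoint closed discs D^i_1, …, D^i_{k_i} ⊆ D, each of radius at most 10^{-i}, with each D^{i+1}_j contained in some D^i_{j'}. Suppose H_i is a continuous map from the closure of D \ ⋃_j D^i_j into a complete metric space X, with H_{i+1} extending H_i, and diam(H_i(D^i_j ∩ dom(H_{i+1}))) ≤ l_i for all j, where ∑ l_i < ∞. Then the maps H_i converge to a continuous map H : D → X extending every H_i. -/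
open Metric
open scoped RealInnerProductSpace

local notation "E2" => EuclideanSpace ℝ (Fin 2)
local notation "Dc" => Metric.closedBall (0 : EuclideanSpace ℝ (Fin 2)) 1

/-- a unit vector orthogonal to a given vector in the plane -/
lemma aux_unit_perp (v : E2) (hv : v ≠ 0) : ∃ u : E2, ‖u‖ = 1 ∧ ⟪v, u⟫ = 0 := by
  set u0 : E2 := (WithLp.equiv 2 (Fin 2 → ℝ)).symm ![-(v 1), v 0] with hu0
  have h0 : u0 0 = -(v 1) := rfl
  have h1 : u0 1 = v 0 := rfl
  have hinner : ⟪v, u0⟫ = 0 := by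
    rw [PiLp.inner_apply]
    simp [Fin.sum_univ_two, h0, h1, RCLike.inner_apply]
    ring
  have hnorm : ‖u0‖ = ‖v‖ := by
    rw [norm_eq_sqrt_real_inner u0, norm_eq_sqrt_real_inner v]
    congr 1
    rw [PiLp.inner_apply, PiLp.inner_apply]
    simp [Fin.sum_univ_two, h0, h1, RCLike.inner_apply]
    ring
  have hvn : ‖v‖ ≠ 0 := norm_ne_zero_iff.mpr hv
  refine ⟨‖v‖⁻¹ • u0, ?_, ?_⟩
  · rw [norm_smul, hnorm, norm_inv, norm_norm, inv_mul_cancel₀ hvn]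
  · rw [real_inner_smul_right, hinner, mul_zero]

/-- a disc inside the unit disc has `‖center‖ + radius ≤ 1` -/
lemma aux_center (o : E2) (ρ : ℝ) (hρ : 0 ≤ ρ)
    (h : closedBall o ρ ⊆ closedBall (0 : E2) 1) : ‖o‖ + ρ ≤ 1 := by
  obtain ⟨u, hu1, hou⟩ : ∃ u : E2, ‖u‖ = 1 ∧ ⟪o, u⟫ = ‖o‖ := by
    by_cases ho : o = 0
    · refine ⟨EuclideanSpace.single 0 1, ?_, ?_⟩
      · simp [EuclideanSpace.norm_single]
      · simp [ho]
    · have hon : ‖o‖ ≠ 0 := norm_ne_zero_iff.mpr ho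
      refine ⟨‖o‖⁻¹ • o, ?_, ?_⟩
      · rw [norm_smul, norm_inv, norm_norm, inv_mul_cancel₀ hon]
      · rw [real_inner_smul_right, real_inner_self_eq_norm_sq]
        field_simp
  have hp : o + ρ • u ∈ closedBall o ρ := by
    rw [mem_closedBall, dist_eq_norm, add_sub_cancel_left, norm_smul, hu1, mul_one]
    exact le_of_eq (abs_of_nonneg hρ)
  have hple : ‖o + ρ • u‖ ≤ 1 := by
    have := h hp
    rwa [mem_closedBall, dist_zero_right] at this
  have hinner : ⟪o + ρ • u, u⟫ = ‖o‖ + ρ := by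
    rw [inner_add_left, real_inner_smul_left, hou, real_inner_self_eq_norm_sq, hu1]
    ring
  calc ‖o‖ + ρ = ⟪o + ρ • u, u⟫ := hinner.symm
    _ ≤ ‖o + ρ • u‖ * ‖u‖ := real_inner_le_norm _ _
    _ = ‖o + ρ • u‖ := by rw [hu1, mul_one]
    _ ≤ 1 := hple

/-- each of finitely many pairwise disjoint closed discs of radius `< 1` inside the closed
unit disc meets the closure of the complement of their union (within the unit disc). -/
lemma aux_nonempty (n : ℕ) (o : Fin n → E2) (ρ : Fin n → ℝ)
    (hρpos : ∀ j, 0 < ρ j) (hρ1 : ∀ j, ρ j < 1)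
    (hsub : ∀ j, closedBall (o j) (ρ j) ⊆ closedBall (0 : E2) 1)
    (hdisj : ∀ j j', j ≠ j' → Disjoint (closedBall (o j) (ρ j)) (closedBall (o j') (ρ j')))
    (j : Fin n) :
    ∃ z, z ∈ closedBall (o j) (ρ j) ∧
      z ∈ closure (closedBall (0 : E2) 1 \ ⋃ j', closedBall (o j') (ρ j')) := by
  obtain ⟨u, hu1, hou⟩ : ∃ u : E2, ‖u‖ = 1 ∧ ⟪o j, u⟫ = 0 := by
    by_cases ho : o j = 0
    · exact ⟨EuclideanSpace.single 0 1, by simp [EuclideanSpace.norm_single], by simp [ho]⟩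
    · exact aux_unit_perp (o j) ho
  have hcenter : ‖o j‖ + ρ j ≤ 1 := aux_center _ _ (hρpos j).le (hsub j)
  set z : E2 := o j + ρ j • u with hz
  have hnormsq : ∀ s : ℝ, ‖o j + s • u‖ ^ 2 = ‖o j‖ ^ 2 + s ^ 2 := by
    intro s
    rw [norm_add_sq_real, real_inner_smul_right, hou, norm_smul, hu1]
    simp [mul_pow, sq_abs]
  have hdistc : ∀ s : ℝ, dist (o j + s • u) (o j) = |s| := by
    intro s
    rw [dist_eq_norm, add_sub_cancel_left, norm_smul, hu1, mul_one, Real.norm_eq_abs]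
  refine ⟨z, ?_, ?_⟩
  · rw [mem_closedBall, hz, hdistc, abs_of_nonneg (hρpos j).le]
  -- approach `z` from outside along direction `u`
  have htend : Filter.Tendsto (fun t : ℝ => o j + (ρ j + t) • u) (nhdsWithin 0 (Set.Ioi 0))
      (nhds z) := by
    have hc : Continuous (fun t : ℝ => o j + (ρ j + t) • u) := by
      exact continuous_const.add ((continuous_const.add continuous_id).smul continuous_const)
    have := hc.tendsto 0
    simp only [add_zero] at this
    exact this.mono_left nhdsWithin_le_nhds
  refine mem_closure_of_tendsto htend ?_
  -- the union of the *other* discs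
  set W : Set E2 := ⋃ j' ∈ ({j}ᶜ : Set (Fin n)), closedBall (o j') (ρ j') with hW
  have hWclosed : IsClosed W := Set.Finite.isClosed_biUnion (Set.toFinite _)
    (fun _ _ => Metric.isClosed_closedBall)
  have hzW : z ∉ W := by
    intro hzW
    rw [hW, Set.mem_iUnion₂] at hzW
    obtain ⟨j', hj', hmem⟩ := hzW
    have hzj : z ∈ closedBall (o j) (ρ j) := by
      rw [mem_closedBall, hz, hdistc, abs_of_nonneg (hρpos j).le]
    exact Set.disjoint_left.mp (hdisj j' j (by simpa using hj')) hmem hzj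
  have hWev : ∀ᶠ t : ℝ in nhdsWithin 0 (Set.Ioi 0), (o j + (ρ j + t) • u) ∉ W :=
    htend (hWclosed.isOpen_compl.mem_nhds hzW)
  have hnormev : ∀ᶠ t : ℝ in nhdsWithin 0 (Set.Ioi 0),
      ‖o j‖ ^ 2 + (ρ j + t) ^ 2 < 1 := by
    have hcont : Continuous (fun t : ℝ => ‖o j‖ ^ 2 + (ρ j + t) ^ 2) := by continuity
    have h0 : ‖o j‖ ^ 2 + (ρ j + 0) ^ 2 < 1 := by
      have h1 : ‖o j‖ ≤ 1 - ρ j := by linarith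
      have h2 : (0:ℝ) ≤ ‖o j‖ := norm_nonneg _
      nlinarith [hρpos j, hρ1 j]
    exact Filter.Eventually.filter_mono nhdsWithin_le_nhds
      ((hcont.tendsto 0) (isOpen_Iio.mem_nhds h0) : _)
  filter_upwards [hWev, hnormev, self_mem_nhdsWithin] with t hW' hn' ht
  have ht0 : (0:ℝ) < t := ht
  constructor
  · rw [mem_closedBall, dist_zero_right]
    have := hnormsq (ρ j + t)
    nlinarith [norm_nonneg (o j + (ρ j + t) • u)]
  · rw [Set.mem_iUnion]
    rintro ⟨j', hj'⟩
    by_cases hjj : j' = j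
    · subst hjj
      rw [mem_closedBall, hdistc] at hj'
      have : |ρ j' + t| = ρ j' + t := abs_of_nonneg (by linarith [hρpos j'])
      linarith [hj', this.symm.trans_le hj']
    · exact hW' (Set.mem_biUnion (Set.mem_compl_singleton_iff.mpr hjj) hj')

/-- if `x` in the unit disc is outside disc `j` and `y` (in the unit disc) is inside it, the
segment from `x` to `y` first meets disc `j` at a point of the closure of the complement of
the union of the (pairwise disjoint) discs, at distance at most `dist x y` from `x`. -/
lemma aux_crossing (n : ℕ) (o : Fin n → E2) (ρ : Fin n → ℝ)
    (hdisj : ∀ j j', j ≠ j' → Disjoint (closedBall (o j) (ρ j)) (closedBall (o j') (ρ j')))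
    (j : Fin n) (x y : E2) (hx : x ∈ closedBall (0 : E2) 1)
    (hxj : x ∉ closedBall (o j) (ρ j)) (hy : y ∈ closedBall (0 : E2) 1)
    (hyj : y ∈ closedBall (o j) (ρ j)) :
    ∃ w, w ∈ closedBall (o j) (ρ j) ∧
      w ∈ closure (closedBall (0 : E2) 1 \ ⋃ j', closedBall (o j') (ρ j')) ∧
      dist x w ≤ dist x y := by
  set γ : ℝ → E2 := fun t => x + t • (y - x) with hγ
  have hγc : Continuous γ := continuous_const.add (continuous_id.smul continuous_const)
  set S : Set ℝ := {t ∈ Set.Icc (0:ℝ) 1 | γ t ∈ closedBall (o j) (ρ j)} with hS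
  have hS1 : (1:ℝ) ∈ S := by
    constructor
    · exact ⟨zero_le_one, le_refl 1⟩
    · simpa [hγ] using hyj
  have hSclosed : IsClosed S := (isClosed_Icc.inter (Metric.isClosed_closedBall.preimage hγc) : _)
  have hSbdd : BddBelow S := ⟨0, fun t ht => ht.1.1⟩
  set t0 : ℝ := sInf S with ht0
  have ht0S : t0 ∈ S := hSclosed.csInf_mem ⟨1, hS1⟩ hSbdd
  have ht0mem : t0 ∈ Set.Icc (0:ℝ) 1 := ht0S.1
  have ht0pos : 0 < t0 := by
    rcases lt_or_eq_of_le ht0mem.1 with h | h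
    · exact h
    · exfalso; apply hxj
      have := ht0S.2
      rw [← h] at this
      simpa [hγ] using this
  have hlt : ∀ t, 0 ≤ t → t < t0 → γ t ∉ closedBall (o j) (ρ j) := by
    intro t h0 h1 hmem
    have : t ∈ S := ⟨⟨h0, h1.le.trans ht0mem.2⟩, hmem⟩
    exact absurd (csInf_le hSbdd this) (not_le.mpr h1)
  set w : E2 := γ t0 with hw
  have hwj : w ∈ closedBall (o j) (ρ j) := ht0S.2
  refine ⟨w, hwj, ?_, ?_⟩
  · -- w is approached along the segment from below
    have htend : Filter.Tendsto γ (nhdsWithin t0 (Set.Iio t0)) (nhds w) :=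
      (hγc.tendsto t0).mono_left nhdsWithin_le_nhds
    refine mem_closure_of_tendsto htend ?_
    set W : Set E2 := ⋃ j' ∈ ({j}ᶜ : Set (Fin n)), closedBall (o j') (ρ j') with hWdef
    have hWclosed : IsClosed W := Set.Finite.isClosed_biUnion (Set.toFinite _)
      (fun _ _ => Metric.isClosed_closedBall)
    have hwW : w ∉ W := by
      intro hmem
      rw [hWdef, Set.mem_iUnion₂] at hmem
      obtain ⟨j', hj', hmem⟩ := hmem
      exact Set.disjoint_left.mp (hdisj j' j (by simpa using hj')) hmem hwj
    have hWev : ∀ᶠ t in nhdsWithin t0 (Set.Iio t0), γ t ∉ W :=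
      htend (hWclosed.isOpen_compl.mem_nhds hwW)
    have hIoo : Set.Ioo 0 t0 ∈ nhdsWithin t0 (Set.Iio t0) := by
      rw [mem_nhdsWithin]
      exact ⟨Set.Ioi 0, isOpen_Ioi, ht0pos, fun t ht => ⟨ht.1, ht.2⟩⟩
    filter_upwards [hWev, hIoo] with t hWt ht
    constructor
    · -- γ t is in the unit disc by convexity
      have : γ t = (1 - t) • x + t • y := by
        rw [hγ]; simp only [smul_sub, sub_smul, one_smul]; abel
      rw [this]
      exact convex_closedBall (0:E2) 1 hx hy (by linarith [ht.1, ht.2, ht0mem.2])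
        (le_of_lt ht.1) (by ring)
    · rw [Set.mem_iUnion]
      rintro ⟨j', hj'⟩
      by_cases hjj : j' = j
      · subst hjj; exact hlt t ht.1.le ht.2 hj'
      · exact hWt (Set.mem_biUnion (Set.mem_compl_singleton_iff.mpr hjj) hj')
  · -- distance bound
    have hd : dist x w = t0 * dist y x := by
      rw [hw, dist_eq_norm]
      simp only [hγ]
      rw [show x - (x + t0 • (y - x)) = t0 • (x - y) by module, norm_smul,
        Real.norm_eq_abs, abs_of_nonneg ht0mem.1, show x - y = -(y-x) by abel, norm_neg,
        ← dist_eq_norm]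
    rw [hd, dist_comm x y]
    nlinarith [dist_nonneg (x := y) (y := x), ht0mem.2, ht0mem.1]

/-- Convergence of the inductively-defined homotopies: given generations of pairwise disjoint
closed discs of radius at most `10⁻ⁱ` in the unit disc, each disc of generation `i+1` lying in
one of generation `i`, and continuous maps `H i` defined off the `i`-th generation discs, each
extending the previous one, such that the images of the `i`-th generation holes (intersected
with the domain of `H (i+1)`) have diameters `≤ l i` with `∑ l i < ∞`, the maps `H i` converge
to a continuous map on the whole disc extending every `H i`. -/
theorem limit_homotopy_exists
    {X : Type*} [MetricSpace X] [CompleteSpace X]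
    (k : ℕ → ℕ) (o : ∀ i, Fin (k i) → EuclideanSpace ℝ (Fin 2)) (ρ : ∀ i, Fin (k i) → ℝ)
    (hρpos : ∀ i j, 0 < ρ i j) (hρsmall : ∀ i j, ρ i j ≤ (10 : ℝ) ^ (-(i : ℤ)))
    (hsub : ∀ i j, closedBall (o i j) (ρ i j) ⊆ closedBall (0 : EuclideanSpace ℝ (Fin 2)) 1)
    (hdisj : ∀ i, ∀ j j', j ≠ j' →
      Disjoint (closedBall (o i j) (ρ i j)) (closedBall (o i j') (ρ i j')))
    (hnest : ∀ i j, ∃ j', closedBall (o (i + 1) j) (ρ (i + 1) j) ⊆ closedBall (o i j') (ρ i j'))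
    (A : ℕ → Set (EuclideanSpace ℝ (Fin 2)))
    (hA : ∀ i, A i = closure
      (closedBall (0 : EuclideanSpace ℝ (Fin 2)) 1 \ ⋃ j, closedBall (o i j) (ρ i j)))
    (H : ℕ → EuclideanSpace ℝ (Fin 2) → X)
    (hHcont : ∀ i, ContinuousOn (H i) (A i))
    (hext : ∀ i, Set.EqOn (H (i + 1)) (H i) (A i))
    (l : ℕ → ℝ) (hsum : Summable l)
    (hdiam : ∀ i j, Metric.diam (H (i + 1) '' (closedBall (o i j) (ρ i j) ∩ A (i + 1))) ≤ l i) :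
    ∃ F : EuclideanSpace ℝ (Fin 2) → X,
      ContinuousOn F (closedBall (0 : EuclideanSpace ℝ (Fin 2)) 1) ∧
      ∀ i, Set.EqOn F (H i) (A i) := by
  classical
  -- basic facts about the domains A i
  have hU : ∀ i, (⋃ j, closedBall (o (i+1) j) (ρ (i+1) j)) ⊆
      ⋃ j, closedBall (o i j) (ρ i j) := by
    intro i
    exact Set.iUnion_subset fun j =>
      (hnest i j).choose_spec.trans
        (Set.subset_iUnion (fun j' => closedBall (o i j') (ρ i j')) (hnest i j).choose)
  have hAmono : ∀ i, A i ⊆ A (i+1) := by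
    intro i
    rw [hA i, hA (i+1)]
    exact closure_mono (Set.diff_subset_diff_right (hU i))
  have hAmono' : ∀ i m, i ≤ m → A i ⊆ A m := by
    intro i m h
    induction h with
    | refl => exact subset_rfl
    | step h ih => exact ih.trans (hAmono _)
  have hAD : ∀ i, A i ⊆ Dc := by
    intro i
    rw [hA i]
    exact closure_minimal Set.diff_subset Metric.isClosed_closedBall
  have hAclosed : ∀ i, IsClosed (A i) := by
    intro i; rw [hA i]; exact isClosed_closure
  have hAcompact : ∀ i, IsCompact (A i) := fun i =>
    IsCompact.of_isClosed_subset (isCompact_closedBall _ _) (hAclosed i) (hAD i)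
  have hDU : ∀ i x, x ∈ Dc → x ∉ A i → ∃ j, x ∈ closedBall (o i j) (ρ i j) := by
    intro i x hxD hxA
    by_contra h
    push_neg at h
    exact hxA (by rw [hA i]; exact subset_closure ⟨hxD, by simpa using h⟩)
  have hHeq : ∀ i m, i ≤ m → Set.EqOn (H m) (H i) (A i) := by
    intro i m h
    induction h with
    | refl => exact fun x _ => rfl
    | @step n h ih => exact fun x hx => by rw [hext n (hAmono' i n h hx)]; exact ih hx
  have hρ1 : ∀ i (j : Fin (k (i+1))), ρ (i+1) j < 1 := by
    intro i j
    have h1 := hρsmall (i+1) j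
    have h2 : ((10:ℝ) ^ (-((i+1 : ℕ) : ℤ))) = ((10:ℝ) ^ (i+1))⁻¹ := by
      rw [zpow_neg, zpow_natCast]
    have h3 : (10:ℝ) ≤ 10 ^ (i+1) := le_self_pow₀ (by norm_num) (Nat.succ_ne_zero i)
    have h4 : ((10:ℝ) ^ (i+1))⁻¹ ≤ (10:ℝ)⁻¹ := by
      apply inv_anti₀ (by norm_num) h3
    rw [h2] at h1
    have : ((10:ℝ))⁻¹ < 1 := by norm_num
    linarith
  -- reference points: z i j lies in the i+1 generation disc j and in A (i+1)
  have hzex : ∀ i (j : Fin (k (i+1))), ∃ z,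
      z ∈ closedBall (o (i+1) j) (ρ (i+1) j) ∧ z ∈ A (i+1) := by
    intro i j
    obtain ⟨z, hz1, hz2⟩ := aux_nonempty (k (i+1)) (o (i+1)) (ρ (i+1)) (hρpos (i+1))
      (hρ1 i) (hsub (i+1)) (hdisj (i+1)) j
    exact ⟨z, hz1, by rw [hA (i+1)]; exact hz2⟩
  choose z hz1 hz2 using hzex
  -- the approximating maps
  set G : ℕ → EuclideanSpace ℝ (Fin 2) → X := fun m x =>
    if x ∈ A (m+1) then H (m+1) x
    else if h : ∃ j, x ∈ closedBall (o (m+1) j) (ρ (m+1) j) then H (m+1) (z m h.choose)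
    else H 0 x with hG
  have hGA : ∀ m x, x ∈ A (m+1) → G m x = H (m+1) x := by
    intro m x hx
    simp only [hG, if_pos hx]
  have hG2 : ∀ m x, x ∈ Dc → x ∉ A (m+1) →
      ∃ j, x ∈ closedBall (o (m+1) j) (ρ (m+1) j) ∧ G m x = H (m+1) (z m j) := by
    intro m x hxD hxA
    obtain ⟨j0, hj0⟩ := hDU (m+1) x hxD hxA
    have hex : ∃ j, x ∈ closedBall (o (m+1) j) (ρ (m+1) j) := ⟨j0, hj0⟩
    refine ⟨hex.choose, hex.choose_spec, ?_⟩
    simp only [hG, if_neg hxA, dif_pos hex]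
  have hGmem : ∀ m x j, x ∈ Dc → x ∉ A (m+1) → x ∈ closedBall (o (m+1) j) (ρ (m+1) j) →
      G m x ∈ H (m+2) '' (closedBall (o (m+1) j) (ρ (m+1) j) ∩ A (m+2)) := by
    intro m x j hxD hxA hxj
    obtain ⟨j', hj', hGx⟩ := hG2 m x hxD hxA
    have hjj : j' = j := by
      by_contra h
      exact Set.disjoint_left.mp (hdisj (m+1) j' j h) hj' hxj
    subst hjj
    rw [hGx, ← hext (m+1) (hz2 m j')]
    exact Set.mem_image_of_mem _ ⟨hz1 m j', hAmono (m+1) (hz2 m j')⟩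
  -- diameter control
  set d : ℕ → ℝ := fun m => max (l (m+1)) 0 with hdDef
  have hd0 : ∀ m, 0 ≤ d m := fun m => le_max_right _ _
  have hCd : ∀ (m : ℕ) (j : Fin (k (m+1))) (a b : X),
      a ∈ H (m+2) '' (closedBall (o (m+1) j) (ρ (m+1) j) ∩ A (m+2)) →
      b ∈ H (m+2) '' (closedBall (o (m+1) j) (ρ (m+1) j) ∩ A (m+2)) →
      dist a b ≤ d m := by
    intro m j a b ha hb
    have hcpt : IsCompact (closedBall (o (m+1) j) (ρ (m+1) j) ∩ A (m+2)) :=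
      IsCompact.of_isClosed_subset (hAcompact (m+2))
        (Metric.isClosed_closedBall.inter (hAclosed (m+2))) Set.inter_subset_right
    have himg : IsCompact (H (m+2) '' (closedBall (o (m+1) j) (ρ (m+1) j) ∩ A (m+2))) :=
      hcpt.image_of_continuousOn ((hHcont (m+2)).mono Set.inter_subset_right)
    calc dist a b ≤ Metric.diam _ := Metric.dist_le_diam_of_mem himg.isBounded ha hb
      _ ≤ l (m+1) := hdiam (m+1) j
      _ ≤ d m := le_max_left _ _
  have hd : Summable d := by
    have h1 : Summable (fun m => |l (m+1)|) := ((summable_nat_add_iff 1).mpr hsum).abs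
    exact Summable.of_nonneg_of_le hd0
      (fun m => max_le (le_abs_self _) (abs_nonneg _)) h1
  -- consecutive distance bound
  have hdist1 : ∀ m x, x ∈ Dc → dist (G m x) (G (m+1) x) ≤ d m := by
    intro m x hxD
    by_cases hxA : x ∈ A (m+1)
    · rw [hGA m x hxA, hGA (m+1) x (hAmono (m+1) hxA), hext (m+1) hxA, dist_self]
      exact hd0 m
    · obtain ⟨j, hxj, _⟩ := hG2 m x hxD hxA
      have hmem1 := hGmem m x j hxD hxA hxj
      by_cases hxA2 : x ∈ A (m+2)
      · rw [hGA (m+1) x hxA2]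
        exact hCd m j _ _ hmem1 (Set.mem_image_of_mem _ ⟨hxj, hxA2⟩)
      · obtain ⟨j2, hxj2, hG2'⟩ := hG2 (m+1) x hxD hxA2
        obtain ⟨j3, hsub3⟩ := hnest (m+1) j2
        have hj3 : j3 = j := by
          by_contra h
          exact Set.disjoint_left.mp (hdisj (m+1) j3 j h) (hsub3 hxj2) hxj
        subst hj3
        refine hCd m j3 _ _ hmem1 ?_
        rw [hG2']
        exact Set.mem_image_of_mem _ ⟨hsub3 (hz1 (m+1) j2), hz2 (m+1) j2⟩
  -- construction of the limit map
  haveI : Nonempty X := ⟨H 0 0⟩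
  have key : ∀ x : EuclideanSpace ℝ (Fin 2), ∃ c : X,
      x ∈ Dc → Filter.Tendsto (fun m => G m x) Filter.atTop (nhds c) := by
    intro x
    by_cases hx : x ∈ Dc
    · obtain ⟨c, hc⟩ := cauchySeq_tendsto_of_complete
        (cauchySeq_of_dist_le_of_summable d (fun m => hdist1 m x hx) hd)
      exact ⟨c, fun _ => hc⟩
    · exact ⟨H 0 x, fun h => absurd h hx⟩
  choose F hF using key
  set T : ℕ → ℝ := fun m => ∑' p, d (m + p) with hTdef
  have hT : ∀ m x, x ∈ Dc → dist (G m x) (F x) ≤ T m := fun m x hx =>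
    dist_le_tsum_of_dist_le_of_tendsto d (fun p => hdist1 p x hx) hd (hF x hx) m
  have hdT : ∀ m, d m ≤ T m := by
    intro m
    have hs : Summable (fun p => d (m + p)) :=
      ((summable_nat_add_iff m).mpr hd).congr (fun p => by rw [add_comm])
    have h1 := Summable.le_tsum hs 0 (fun p _ => hd0 _)
    simpa using h1
  have hTtend : Filter.Tendsto T Filter.atTop (nhds 0) := by
    have h1 := tendsto_sum_nat_add d
    exact h1.congr (fun m => tsum_congr fun p => by rw [add_comm])
  -- the limit map extends every H i
  have hFeq : ∀ i, Set.EqOn F (H i) (A i) := by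
    intro i x hx
    have hxD : x ∈ Dc := hAD i hx
    have htt := hF x hxD
    have heq : ∀ᶠ m in Filter.atTop, G m x = H i x := by
      rw [Filter.eventually_atTop]
      refine ⟨i, fun m hm => ?_⟩
      have him : i ≤ m + 1 := hm.trans (Nat.le_succ m)
      rw [hGA m x (hAmono' i (m+1) him hx)]
      exact hHeq i (m+1) him hx
    exact tendsto_nhds_unique (htt.congr' heq) tendsto_const_nhds
  refine ⟨F, ?_, hFeq⟩
  -- continuity
  rw [Metric.continuousOn_iff]
  intro x hx ε hε
  have hev : ∀ᶠ m in Filter.atTop, T m < ε/4 := hTtend (gt_mem_nhds (by positivity))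
  obtain ⟨N, hN⟩ := Filter.eventually_atTop.mp hev
  by_cases hcase : ∃ i0, x ∈ A i0
  · -- Case A : x is in some A i
    obtain ⟨i0, hxA0⟩ := hcase
    set n := max N i0 with hn
    have hTn : T n < ε/4 := hN n (le_max_left _ _)
    have hxA : x ∈ A (n+1) :=
      hAmono' i0 (n+1) ((le_max_right N i0).trans (Nat.le_succ n)) hxA0
    have hc := hHcont (n+1) x hxA
    rw [Metric.continuousWithinAt_iff] at hc
    obtain ⟨δ0, hδ0pos, hδ0⟩ := hc (ε/4) (by positivity)
    refine ⟨δ0, hδ0pos, ?_⟩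
    intro y hyD hyx
    have hFx : F x = H (n+1) x := hFeq (n+1) hxA
    by_cases hyA : y ∈ A (n+1)
    · have h1 : dist (H (n+1) y) (H (n+1) x) < ε/4 := hδ0 hyA hyx
      rw [hFeq (n+1) hyA, hFx]
      linarith
    · obtain ⟨j, hyj⟩ := hDU (n+1) y hyD hyA
      have h5 := hGmem n y j hyD hyA hyj
      have hTy : dist (G n y) (F y) ≤ T n := hT n y hyD
      by_cases hxj : x ∈ closedBall (o (n+1) j) (ρ (n+1) j)
      · have h1 : H (n+2) x ∈ H (n+2) ''
            (closedBall (o (n+1) j) (ρ (n+1) j) ∩ A (n+2)) :=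
          Set.mem_image_of_mem _ ⟨hxj, hAmono (n+1) hxA⟩
        have h6 : dist (G n y) (H (n+2) x) ≤ d n := hCd n j _ _ h5 h1
        have hFx2 : F x = H (n+2) x := by
          rw [hFx]; exact (hext (n+1) hxA).symm
        calc dist (F y) (F x) ≤ dist (F y) (G n y) + dist (G n y) (F x) :=
              dist_triangle _ _ _
          _ ≤ T n + d n := by
              rw [dist_comm (F y), hFx2]
              exact add_le_add hTy h6
          _ < ε := by linarith [hdT n]
      · obtain ⟨w, hwj, hwcl, hwd⟩ := aux_crossing (k (n+1)) (o (n+1)) (ρ (n+1))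
          (hdisj (n+1)) j x y hx hxj hyD hyj
        have hwA : w ∈ A (n+1) := by rw [hA (n+1)]; exact hwcl
        have hwx : dist w x < δ0 := by
          rw [dist_comm]
          exact lt_of_le_of_lt hwd (by rwa [dist_comm x y])
        have h3 : dist (H (n+1) w) (H (n+1) x) < ε/4 := hδ0 hwA hwx
        have h4 : H (n+2) w ∈ H (n+2) ''
            (closedBall (o (n+1) j) (ρ (n+1) j) ∩ A (n+2)) :=
          Set.mem_image_of_mem _ ⟨hwj, hAmono (n+1) hwA⟩
        have h6 : dist (G n y) (H (n+2) w) ≤ d n := hCd n j _ _ h5 h4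
        have h7 : dist (H (n+2) w) (F x) < ε/4 := by
          rw [hext (n+1) hwA, hFx]; exact h3
        calc dist (F y) (F x)
            ≤ dist (F y) (G n y) + dist (G n y) (H (n+2) w) + dist (H (n+2) w) (F x) :=
              dist_triangle4 _ _ _ _
          _ < T n + d n + ε/4 := by
              rw [dist_comm (F y)]
              exact add_lt_add_of_le_of_lt (add_le_add hTy h6) h7
          _ < ε := by linarith [hdT n]
  · -- Case B : x is in no A i
    push_neg at hcase
    have hTn : T N < ε/4 := hN N le_rfl
    have hxA : x ∉ A (N+1) := fun h => hcase (N+1) h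
    obtain ⟨j, hxj⟩ := hDU (N+1) x hx hxA
    have hxcl : x ∉ closure (Dc \ ⋃ j', closedBall (o (N+1) j') (ρ (N+1) j')) := by
      rw [← hA (N+1)]; exact hxA
    obtain ⟨δ1, hδ1pos, hball1⟩ := Metric.isOpen_iff.mp isClosed_closure.isOpen_compl x hxcl
    set W : Set (EuclideanSpace ℝ (Fin 2)) :=
      ⋃ j' ∈ ({j}ᶜ : Set (Fin (k (N+1)))), closedBall (o (N+1) j') (ρ (N+1) j') with hWdef
    have hWclosed : IsClosed W := Set.Finite.isClosed_biUnion (Set.toFinite _)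
      (fun _ _ => Metric.isClosed_closedBall)
    have hxW : x ∉ W := by
      intro hmem
      rw [hWdef, Set.mem_iUnion₂] at hmem
      obtain ⟨j', hj', hmem⟩ := hmem
      exact Set.disjoint_left.mp (hdisj (N+1) j' j (by simpa using hj')) hmem hxj
    obtain ⟨δ2, hδ2pos, hball2⟩ := Metric.isOpen_iff.mp hWclosed.isOpen_compl x hxW
    refine ⟨min δ1 δ2, lt_min hδ1pos hδ2pos, ?_⟩
    intro y hyD hyx
    have hy1 : y ∉ Dc \ ⋃ j', closedBall (o (N+1) j') (ρ (N+1) j') := by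
      intro hmem
      exact hball1 (mem_ball.mpr (lt_of_lt_of_le hyx (min_le_left _ _)))
        (subset_closure hmem)
    have hyU : y ∈ ⋃ j', closedBall (o (N+1) j') (ρ (N+1) j') := by
      by_contra h
      exact hy1 ⟨hyD, h⟩
    obtain ⟨j2, hyj2⟩ := Set.mem_iUnion.mp hyU
    have hjj : j2 = j := by
      by_contra h
      exact hball2 (mem_ball.mpr (lt_of_lt_of_le hyx (min_le_right _ _)))
        (Set.mem_biUnion (by simpa using h) hyj2)
    subst hjj
    have h2 := hGmem N x j2 hx hxA hxj
    have hTx : dist (G N x) (F x) ≤ T N := hT N x hx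
    by_cases hyA : y ∈ A (N+1)
    · have hFy : F y = H (N+2) y := by
        rw [hFeq (N+1) hyA]; exact (hext (N+1) hyA).symm
      have h1 : H (N+2) y ∈ H (N+2) ''
          (closedBall (o (N+1) j2) (ρ (N+1) j2) ∩ A (N+2)) :=
        Set.mem_image_of_mem _ ⟨hyj2, hAmono (N+1) hyA⟩
      have h6 : dist (H (N+2) y) (G N x) ≤ d N := hCd N j2 _ _ h1 h2
      calc dist (F y) (F x) ≤ dist (F y) (G N x) + dist (G N x) (F x) :=
            dist_triangle _ _ _
        _ ≤ d N + T N := add_le_add (by rw [hFy]; exact h6) hTx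
        _ < ε := by linarith [hdT N]
    · have h3 := hGmem N y j2 hyD hyA hyj2
      have hTy : dist (G N y) (F y) ≤ T N := hT N y hyD
      have h6 : dist (G N y) (G N x) ≤ d N := hCd N j2 _ _ h3 h2
      calc dist (F y) (F x)
          ≤ dist (F y) (G N y) + dist (G N y) (G N x) + dist (G N x) (F x) :=
            dist_triangle4 _ _ _ _
        _ ≤ T N + d N + T N := add_le_add (add_le_add (by rw [dist_comm]; exact hTy) h6) hTx
        _ < ε := by linarith [hdT N]
end
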